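/- arXiv:0707.0230 — 2 statements merged into one kernel-verified Lean document; each statement's English description precedes it below -/
import Mathlib

section
/- Let h > 0 and let M : [−h, 0] → S^{2n} be piecewise continuous, partitioned into n × n blocks M = [[M₁₁, M₁₂], [M₂₁, M₂₂]]. Suppose there exists ε > 0 such that M₂₂(t) ⪰ ε I for all t ∈ [−h, 0]. Then the following are equivalent: (i) for every continuous function y : [−h, 0] → ℝⁿ, ∫_{−h}^{0} [y(0); y(t)]ᵀ M(t) [y(0); y(t)] dt ≥ 0; (ii) there exists a piecewise continuous function T : [−h, 0] → S^n such that M(t) + [[T(t), 0], [0, 0]] ⪰ 0 for all t ∈ [−h, 0] and ∫_{−h}^{0} T(t) dt = 0. -/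
open Matrix

/-- A real-valued function on `[-h,0]` is piecewise continuous if there are finitely many
points `-h < t₁ < ⋯ < t_m < 0` such that it is bounded on `[-h,0]`, continuous (within
`[-h,0]`) off these points, and has finite one-sided limits at each of them. -/
def PiecewiseCts (h : ℝ) (f : ℝ → ℝ) : Prop :=
  ∃ P : Finset ℝ, (↑P : Set ℝ) ⊆ Set.Ioo (-h) 0 ∧
    Bornology.IsBounded (f '' Set.Icc (-h) 0) ∧
    (∀ t ∈ Set.Icc (-h) 0 \ (↑P : Set ℝ), ContinuousWithinAt f (Set.Icc (-h) 0) t) ∧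
    ∀ p ∈ P, (∃ L : ℝ, Filter.Tendsto f (nhdsWithin p (Set.Iio p)) (nhds L)) ∧
      (∃ L : ℝ, Filter.Tendsto f (nhdsWithin p (Set.Ioi p)) (nhds L))

/-- The lower-right `n × n` block `M₂₂` of a matrix in `S^{m+n}`. -/
def blk22 (m n : ℕ) (M : Matrix (Fin (m + n)) (Fin (m + n)) ℝ) :
    Matrix (Fin n) (Fin n) ℝ :=
  Matrix.of fun i j => M (Fin.natAdd m i) (Fin.natAdd m j)

/-- The embedding `T ↦ [[T, 0], [0, 0]]` of `S^m` into `S^{m+n}`. -/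
def embedUL (m n : ℕ) (T : Matrix (Fin m) (Fin m) ℝ) :
    Matrix (Fin (m + n)) (Fin (m + n)) ℝ :=
  Matrix.reindex finSumFinEquiv finSumFinEquiv (Matrix.fromBlocks T 0 0 0)

/-!
Write `M = [[A, B], [Bᵀ, D]]` with `D ≻ 0`. Completing the square,
`[x; y]ᵀ M [x; y] = (y - g)ᵀ D (y - g) + xᵀ S x` with the Schur complement
`S = A - B D⁻¹ Bᵀ` and `g = -D⁻¹ Bᵀ x`.

(ii) ⇒ (i): the integrand is `[x; y]ᵀ (M + [[T, 0], [0, 0]]) [x; y] - xᵀ T x`, and the last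
term integrates to `0` since `∫ T = 0`.

(i) ⇒ (ii): testing (i) on continuous `y` with `y(0) = x` that converge boundedly and almost
everywhere to the piecewise continuous `g` gives `xᵀ (∫ S) x ≥ 0`. Then `T = h⁻¹ ∫ S - S`
works, because `M + [[T, 0], [0, 0]] ⪰ 0` iff its Schur complement `S + T = h⁻¹ ∫ S` is.
-/

open MeasureTheory Set Filter Topology
open scoped Interval

namespace Matrix

theorem abs_dotProduct_mulVec_le {ι : Type*} [Fintype ι] (A : Matrix ι ι ℝ) {v : ι → ℝ}
    {a b : ℝ} (hv : ‖v‖ ≤ a) (hA : ∀ i j, |A i j| ≤ b) :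
    |v ⬝ᵥ A *ᵥ v| ≤ Fintype.card ι ^ 2 * (a * b * a) := by
  have hvi : ∀ i, |v i| ≤ a := fun i => (norm_le_pi_norm v i).trans hv
  simp only [dotProduct, mulVec, Finset.mul_sum]
  calc |∑ i, ∑ j, v i * (A i j * v j)| ≤ ∑ i, ∑ j, |v i * (A i j * v j)| :=
        (Finset.abs_sum_le_sum_abs _ _).trans
          (Finset.sum_le_sum fun i _ => Finset.abs_sum_le_sum_abs _ _)
    _ ≤ ∑ _i : ι, ∑ _j : ι, a * (b * a) := by
        gcongr with i _ j _
        rw [abs_mul, abs_mul]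
        exact mul_le_mul (hvi i) (mul_le_mul (hA i j) (hvi j) (abs_nonneg _)
          ((abs_nonneg _).trans (hA i j))) (by positivity) ((abs_nonneg _).trans (hvi i))
    _ = Fintype.card ι ^ 2 * (a * b * a) := by simp [sq]; ring

theorem integral_dotProduct_mulVec_const {ι : Type*} [Fintype ι] {A : ℝ → Matrix ι ι ℝ}
    {a b : ℝ} (hA : ∀ i j, IntervalIntegrable (fun t => A t i j) volume a b) (x : ι → ℝ) :
    ∫ t in a..b, x ⬝ᵥ A t *ᵥ x =
      x ⬝ᵥ (of fun i j => ∫ t in a..b, A t i j) *ᵥ x := by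
  have hA' : ∀ i j, IntervalIntegrable (fun t => x i * (A t i j * x j)) volume a b :=
    fun i j => ((hA i j).mul_const _).const_mul _
  simp only [dotProduct, mulVec, of_apply, Finset.mul_sum]
  rw [intervalIntegral.integral_finsetSum fun i _ => by
    simpa only [Finset.sum_fn] using IntervalIntegrable.sum Finset.univ fun j _ => hA' i j]
  refine Finset.sum_congr rfl fun i _ => ?_
  rw [intervalIntegral.integral_finsetSum fun j _ => hA' i j]
  simp [intervalIntegral.integral_const_mul, intervalIntegral.integral_mul_const]

theorem isClosed_setOf_posSemidef {ι : Type*} [Fintype ι] :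
    IsClosed {A : Matrix ι ι ℝ | A.PosSemidef} := by
  simp only [posSemidef_iff_dotProduct_mulVec, IsHermitian, ofPred_and, ofPred_forall]
  exact (isClosed_eq continuous_id.matrix_conjTranspose continuous_id).inter
    (isClosed_iInter fun x => isClosed_le continuous_const (by fun_prop))

theorem PosSemidef.posDef_of_sub_smul_one {ι : Type*} [Fintype ι] [DecidableEq ι]
    {A : Matrix ι ι ℝ} {ε : ℝ} (hε : 0 < ε) (hA : (A - ε • 1).PosSemidef) :
    A.PosDef := by
  simpa using PosDef.posSemidef_add hA (PosDef.one.smul hε)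

variable {m n : ℕ}

def blk11 (m n : ℕ) (M : Matrix (Fin (m + n)) (Fin (m + n)) ℝ) : Matrix (Fin m) (Fin m) ℝ :=
  of fun i j => M (Fin.castAdd n i) (Fin.castAdd n j)

def blk12 (m n : ℕ) (M : Matrix (Fin (m + n)) (Fin (m + n)) ℝ) : Matrix (Fin m) (Fin n) ℝ :=
  of fun i j => M (Fin.castAdd n i) (Fin.natAdd m j)

noncomputable def schurCompl (M : Matrix (Fin (m + n)) (Fin (m + n)) ℝ) :
    Matrix (Fin m) (Fin m) ℝ :=
  blk11 m n M - blk12 m n M * (blk22 m n M)⁻¹ * (blk12 m n M)ᵀ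

/-- For `M₂₂ ≻ 0`, `y ↦ [x; y]ᵀ M [x; y]` is minimised at `minimizer M x`. -/
noncomputable def minimizer (M : Matrix (Fin (m + n)) (Fin (m + n)) ℝ) (x : Fin m → ℝ) :
    Fin n → ℝ :=
  -(((blk22 m n M)⁻¹ * (blk12 m n M)ᵀ) *ᵥ x)

theorem reindex_finSumFinEquiv_eq_fromBlocks {M : Matrix (Fin (m + n)) (Fin (m + n)) ℝ}
    (hM : M.IsSymm) :
    reindex finSumFinEquiv.symm finSumFinEquiv.symm M =
      fromBlocks (blk11 m n M) (blk12 m n M) (blk12 m n M)ᵀ (blk22 m n M) := by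
  ext (i | i) (j | j)
  · rfl
  · rfl
  · exact hM.apply _ _
  · rfl

theorem reindex_finSumFinEquiv_embedUL (T : Matrix (Fin m) (Fin m) ℝ) :
    reindex finSumFinEquiv.symm finSumFinEquiv.symm (embedUL m n T) = fromBlocks T 0 0 0 := by
  simp [embedUL]

theorem append_dotProduct_mulVec_append_eq_sumElim
    (M : Matrix (Fin (m + n)) (Fin (m + n)) ℝ) (x : Fin m → ℝ) (y : Fin n → ℝ) :
    Fin.append x y ⬝ᵥ M *ᵥ Fin.append x y =
      (x ⊕ᵥ y) ⬝ᵥ reindex finSumFinEquiv.symm finSumFinEquiv.symm M *ᵥ (x ⊕ᵥ y) := by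
  have : (x ⊕ᵥ y) = Fin.append x y ∘ finSumFinEquiv := Fin.append_comp_sumElim.symm
  rw [reindex_apply, Equiv.symm_symm, submatrix_mulVec_equiv, this, Function.comp_assoc,
    Equiv.self_comp_symm, Function.comp_id, ← comp_equiv_symm_dotProduct, Function.comp_assoc,
    Equiv.self_comp_symm, Function.comp_id]

theorem append_dotProduct_embedUL_mulVec_append (T : Matrix (Fin m) (Fin m) ℝ)
    (x : Fin m → ℝ) (y : Fin n → ℝ) :
    Fin.append x y ⬝ᵥ embedUL m n T *ᵥ Fin.append x y = x ⬝ᵥ T *ᵥ x := by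
  rw [append_dotProduct_mulVec_append_eq_sumElim, reindex_finSumFinEquiv_embedUL]
  simp [fromBlocks_mulVec]

theorem blk22_isSymm {M : Matrix (Fin (m + n)) (Fin (m + n)) ℝ} (hM : M.IsSymm) :
    (blk22 m n M).IsSymm :=
  IsSymm.ext fun _ _ => hM.apply _ _

theorem schurCompl_isSymm {M : Matrix (Fin (m + n)) (Fin (m + n)) ℝ} (hM : M.IsSymm) :
    (schurCompl M).IsSymm := by
  have h11 : (blk11 m n M).IsSymm := IsSymm.ext fun _ _ => hM.apply _ _
  rw [IsSymm, schurCompl, transpose_sub, h11.eq, transpose_mul, transpose_mul,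
    transpose_transpose, transpose_nonsing_inv, (blk22_isSymm hM).eq, Matrix.mul_assoc]

theorem append_dotProduct_mulVec_append_eq_schurCompl
    {M : Matrix (Fin (m + n)) (Fin (m + n)) ℝ} (hM : M.IsSymm) (hD : IsUnit (blk22 m n M).det)
    (x : Fin m → ℝ) (y : Fin n → ℝ) :
    Fin.append x y ⬝ᵥ M *ᵥ Fin.append x y =
      (y - minimizer M x) ⬝ᵥ blk22 m n M *ᵥ (y - minimizer M x) +
        x ⬝ᵥ schurCompl M *ᵥ x := by
  have := invertibleOfIsUnitDet _ hD
  have key := schur_complement_eq₂₂ (blk11 m n M) (blk12 m n M) x y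
    (isHermitian_iff_isSymm.2 (blk22_isSymm hM))
  simp only [star_trivial, conjTranspose_eq_transpose_of_trivial, ← dotProduct_mulVec] at key
  rw [append_dotProduct_mulVec_append_eq_sumElim, reindex_finSumFinEquiv_eq_fromBlocks hM, key,
    minimizer, sub_neg_eq_add, add_comm y, schurCompl]

theorem posSemidef_add_embedUL_iff {M : Matrix (Fin (m + n)) (Fin (m + n)) ℝ} (hM : M.IsSymm)
    (hD : (blk22 m n M).PosDef) (T : Matrix (Fin m) (Fin m) ℝ) :
    (M + embedUL m n T).PosSemidef ↔ (schurCompl M + T).PosSemidef := by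
  have := invertibleOfIsUnitDet _ ((isUnit_iff_isUnit_det _).1 hD.isUnit)
  have hsplit : (M + embedUL m n T).submatrix finSumFinEquiv finSumFinEquiv =
      fromBlocks (blk11 m n M + T) (blk12 m n M) (blk12 m n M)ᴴ (blk22 m n M) := by
    change reindex finSumFinEquiv.symm finSumFinEquiv.symm M +
      reindex finSumFinEquiv.symm finSumFinEquiv.symm (embedUL m n T) = _
    rw [reindex_finSumFinEquiv_eq_fromBlocks hM, reindex_finSumFinEquiv_embedUL, fromBlocks_add,
      conjTranspose_eq_transpose_of_trivial]
    simp
  rw [← posSemidef_submatrix_equiv finSumFinEquiv, hsplit, PosDef.fromBlocks₂₂ _ _ hD,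
    conjTranspose_eq_transpose_of_trivial, schurCompl, add_sub_right_comm]

theorem continuous_blk22 : Continuous (blk22 m n) :=
  continuous_matrix fun _ _ => continuous_id.matrix_elem _ _

theorem continuousOn_blk22_inv :
    ContinuousOn (fun M => (blk22 m n M)⁻¹) {M | IsUnit (blk22 m n M).det} := fun _ hM =>
  ((continuousAt_matrix_inv _ (NormedRing.inverse_continuousAt hM.unit)).comp
    continuous_blk22.continuousAt).continuousWithinAt

theorem continuousOn_schurCompl :
    ContinuousOn (schurCompl (m := m) (n := n)) {M | IsUnit (blk22 m n M).det} := by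
  have := continuousOn_blk22_inv (m := m) (n := n)
  unfold schurCompl blk11 blk12
  fun_prop

theorem continuousOn_minimizer (x : Fin m → ℝ) :
    ContinuousOn (fun M => minimizer (n := n) M x) {M | IsUnit (blk22 m n M).det} := by
  have := continuousOn_blk22_inv (m := m) (n := n)
  unfold minimizer blk12
  fun_prop

theorem isClosed_setOf_blk22_sub_posSemidef (ε : ℝ) :
    IsClosed {A : Matrix (Fin (m + n)) (Fin (m + n)) ℝ | (blk22 m n A - ε • 1).PosSemidef} :=
  isClosed_setOf_posSemidef.preimage (continuous_blk22.sub continuous_const)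

theorem setOf_blk22_sub_posSemidef_subset {ε : ℝ} (hε : 0 < ε) :
    {A : Matrix (Fin (m + n)) (Fin (m + n)) ℝ | (blk22 m n A - ε • 1).PosSemidef} ⊆
      {A | IsUnit (blk22 m n A).det} :=
  fun _ hA => (hA.posDef_of_sub_smul_one hε).det_pos.ne'.isUnit

end Matrix

namespace PiecewiseCts

variable {h : ℝ} {f g : ℝ → ℝ}

theorem of_continuousOn (hf : ContinuousOn f (Icc (-h) 0)) : PiecewiseCts h f :=
  ⟨∅, by simp, (isCompact_Icc.image_of_continuousOn hf).isBounded, fun t ht => hf t ht.1,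
    by simp⟩

theorem const (c : ℝ) : PiecewiseCts h fun _ => c :=
  of_continuousOn continuousOn_const

theorem exists_forall_abs_le (hf : PiecewiseCts h f) :
    ∃ C, ∀ t ∈ Icc (-h) 0, |f t| ≤ C := by
  obtain ⟨_, _, hbdd, _, _⟩ := hf
  obtain ⟨C, hC⟩ := isBounded_iff_forall_norm_le.1 hbdd
  exact ⟨C, fun t ht => hC _ (mem_image_of_mem f ht)⟩

theorem exists_tendsto (hf : PiecewiseCts h f) {p : ℝ} (hp : p ∈ Ioo (-h) 0) {s : Set ℝ}
    (hs : s = Iio p ∨ s = Ioi p) : ∃ L, Tendsto f (𝓝[s] p) (𝓝 L) := by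
  obtain ⟨P, _, _, hcont, hlim⟩ := hf
  by_cases hpP : p ∈ P
  · rcases hs with rfl | rfl
    exacts [(hlim p hpP).1, (hlim p hpP).2]
  · have hc := (hcont p ⟨Ioo_subset_Icc_self hp, hpP⟩).continuousAt (Icc_mem_nhds hp.1 hp.2)
    exact ⟨f p, hc.tendsto.mono_left nhdsWithin_le_nhds⟩

theorem comp_pi {ι : Type*} [Fintype ι] {f : ι → ℝ → ℝ}
    (hf : ∀ i, PiecewiseCts h (f i)) {K : Set (ι → ℝ)} (hK : IsClosed K)
    (hfK : ∀ t ∈ Icc (-h) 0, (fun i => f i t) ∈ K)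
    {F : (ι → ℝ) → ℝ} (hF : ContinuousOn F K) :
    PiecewiseCts h fun t => F fun i => f i t := by
  classical
  set v : ℝ → ι → ℝ := fun t i => f i t
  have hlim : ∀ p ∈ Ioo (-h) 0, ∀ s, s = Iio p ∨ s = Ioi p →
      ∃ L, Tendsto (fun t => F (v t)) (𝓝[s] p) (𝓝 L) := by
    intro p hp s hs
    choose L hL using fun i => (hf i).exists_tendsto hp hs
    have hvL : Tendsto v (𝓝[s] p) (𝓝 L) := tendsto_pi_nhds.2 hL
    have hvK : ∀ᶠ t in 𝓝[s] p, v t ∈ K :=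
      eventually_nhdsWithin_of_eventually_nhds <|
        eventually_of_mem (Ioo_mem_nhds hp.1 hp.2) fun t ht => hfK t (Ioo_subset_Icc_self ht)
    have : (𝓝[s] p).NeBot := by rcases hs with rfl | rfl <;> infer_instance
    exact ⟨F L, (hF L (hK.mem_of_tendsto hvL hvK)).tendsto.comp
      (tendsto_nhdsWithin_iff.2 ⟨hvL, hvK⟩)⟩
  choose P hP hbdd hcont _ using hf
  refine ⟨Finset.univ.biUnion P, ?_, ?_, fun t ht => ?_, fun p hp => ?_⟩
  · simpa using hP
  · have hv : Bornology.IsBounded (v '' Icc (-h) 0) :=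
      Bornology.forall_isBounded_image_eval_iff.1 fun i => by simpa [image_image] using hbdd i
    refine ((hv.isCompact_closure.inter_right hK).image_of_continuousOn
      (hF.mono inter_subset_right)).isBounded.subset ?_
    rintro _ ⟨t, ht, rfl⟩
    exact ⟨v t, ⟨subset_closure (mem_image_of_mem v ht), hfK t ht⟩, rfl⟩
  · have hvt : ContinuousWithinAt v (Icc (-h) 0) t := continuousWithinAt_pi.2 fun i =>
      hcont i t ⟨ht.1, fun hi => ht.2 (by simpa using ⟨i, hi⟩)⟩
    exact (hF (v t) (hfK t ht.1)).comp hvt hfK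
  · have hp' : p ∈ Ioo (-h) 0 := by
      obtain ⟨i, -, hi⟩ := Finset.mem_biUnion.1 hp
      exact hP i hi
    exact ⟨hlim p hp' _ (Or.inl rfl), hlim p hp' _ (Or.inr rfl)⟩

theorem comp₂ (hf : PiecewiseCts h f) (hg : PiecewiseCts h g) {F : ℝ → ℝ → ℝ}
    (hF : Continuous fun p : ℝ × ℝ => F p.1 p.2) : PiecewiseCts h fun t => F (f t) (g t) :=
  comp_pi (f := ![f, g]) (K := univ) (F := fun v => F (v 0) (v 1))
    (Fin.forall_fin_two.2 ⟨hf, hg⟩) isClosed_univ (fun _ _ => trivial)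
    (hF.comp (f := fun v : Fin 2 → ℝ => (v 0, v 1))
      ((continuous_apply 0).prodMk (continuous_apply 1))).continuousOn

theorem add (hf : PiecewiseCts h f) (hg : PiecewiseCts h g) :
    PiecewiseCts h fun t => f t + g t :=
  hf.comp₂ hg continuous_add

theorem sub (hf : PiecewiseCts h f) (hg : PiecewiseCts h g) :
    PiecewiseCts h fun t => f t - g t :=
  hf.comp₂ hg continuous_sub

theorem mul (hf : PiecewiseCts h f) (hg : PiecewiseCts h g) :
    PiecewiseCts h fun t => f t * g t :=
  hf.comp₂ hg continuous_mul

theorem finset_sum {ι : Type*} (s : Finset ι) {f : ι → ℝ → ℝ}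
    (hf : ∀ i ∈ s, PiecewiseCts h (f i)) : PiecewiseCts h fun t => ∑ i ∈ s, f i t := by
  classical
  induction s using Finset.induction_on with
  | empty => simpa using const 0
  | insert a s ha ih =>
    simp only [Finset.sum_insert ha]
    exact (hf a (s.mem_insert_self a)).add (ih fun i hi => hf i (Finset.mem_insert_of_mem hi))

theorem dotProduct_mulVec {m : Type*} [Fintype m] {v w : ℝ → m → ℝ}
    {A : ℝ → Matrix m m ℝ} (hv : ∀ i, PiecewiseCts h fun t => v t i)
    (hA : ∀ i j, PiecewiseCts h fun t => A t i j)
    (hw : ∀ i, PiecewiseCts h fun t => w t i) :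
    PiecewiseCts h fun t => v t ⬝ᵥ A t *ᵥ w t := by
  simp only [dotProduct, Matrix.mulVec]
  exact finset_sum _ fun i _ => (hv i).mul (finset_sum _ fun j _ => (hA i j).mul (hw j))

theorem comp_matrix {m : Type*} [Fintype m] {A : ℝ → Matrix m m ℝ}
    (hA : ∀ i j, PiecewiseCts h fun t => A t i j) {K : Set (Matrix m m ℝ)} (hK : IsClosed K)
    (hAK : ∀ t ∈ Icc (-h) 0, A t ∈ K) {F : Matrix m m ℝ → ℝ} (hF : ContinuousOn F K) :
    PiecewiseCts h fun t => F (A t) := by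
  have he : Continuous fun v : m × m → ℝ => Matrix.of fun i j => v (i, j) :=
    continuous_matrix fun i j => continuous_apply _
  exact comp_pi (f := fun p t => A t p.1 p.2) (fun p => hA p.1 p.2) (hK.preimage he) hAK
    (hF.comp he.continuousOn fun _ hv => hv)

theorem exists_forall_norm_le {ι : Type*} [Fintype ι] {v : ℝ → ι → ℝ}
    (hv : ∀ i, PiecewiseCts h fun t => v t i) : ∃ C, ∀ t ∈ Icc (-h) 0, ‖v t‖ ≤ C := by
  obtain ⟨C, hC⟩ := (comp_pi hv isClosed_univ (fun _ _ => trivial)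
    continuous_norm.continuousOn).exists_forall_abs_le
  exact ⟨C, fun t ht => (le_abs_self _).trans (hC t ht)⟩

theorem aestronglyMeasurable (hf : PiecewiseCts h f) :
    AEStronglyMeasurable f (volume.restrict (Icc (-h) 0)) := by
  obtain ⟨P, -, -, hcont, -⟩ := hf
  rw [← Measure.restrict_congr_set (sdiff_null_ae_eq_self (P.finite_toSet.measure_zero _))]
  exact ContinuousOn.aestronglyMeasurable (fun t ht => (hcont t ht).mono sdiff_subset)
    (measurableSet_Icc.diff P.finite_toSet.measurableSet)

theorem integrableOn (hf : PiecewiseCts h f) : IntegrableOn f (Icc (-h) 0) := by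
  obtain ⟨C, hC⟩ := hf.exists_forall_abs_le
  exact Integrable.of_bound hf.aestronglyMeasurable C
    ((ae_restrict_iff' measurableSet_Icc).2 (Eventually.of_forall hC))

theorem intervalIntegrable (hh : 0 ≤ h) (hf : PiecewiseCts h f) :
    IntervalIntegrable f volume (-h) 0 :=
  (uIcc_of_le (neg_nonpos.2 hh) ▸ hf.integrableOn).intervalIntegrable

theorem ae_continuousAt (hf : PiecewiseCts h f) :
    ∀ᵐ t, t ∈ Ioo (-h) 0 → ContinuousAt f t := by
  obtain ⟨P, -, -, hcont, -⟩ := hf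
  filter_upwards [measure_eq_zero_iff_ae_notMem.1 (P.finite_toSet.measure_zero volume)]
    with t htP ht
  exact (hcont t ⟨Ioo_subset_Icc_self ht, htP⟩).continuousAt (Icc_mem_nhds ht.1 ht.2)

theorem append {m n : ℕ} (x : Fin m → ℝ) {y : ℝ → Fin n → ℝ}
    (hy : ∀ i, PiecewiseCts h fun t => y t i) (i : Fin (m + n)) :
    PiecewiseCts h fun t => Fin.append x (y t) i := by
  refine Fin.addCases (fun i => ?_) (fun i => ?_) i
  · simpa using const (x i)
  · simpa using hy i

theorem tendsto_integral_dotProduct_mulVec_sub {ι α : Type*} [Fintype ι] {l : Filter α}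
    [l.IsCountablyGenerated] (hh : 0 ≤ h) {A : ℝ → Matrix ι ι ℝ}
    (hA : ∀ i j, PiecewiseCts h fun t => A t i j) {g : ℝ → ι → ℝ}
    (hg : ∀ i, PiecewiseCts h fun t => g t i) {Y : α → ℝ → ι → ℝ}
    (hY : ∀ δ i, PiecewiseCts h fun t => Y δ t i) {C : ℝ}
    (hYC : ∀ᶠ δ in l, ∀ t ∈ Icc (-h) 0, ‖Y δ t‖ ≤ C)
    (hlim : ∀ᵐ t, t ∈ Ioo (-h) 0 → Tendsto (fun δ => Y δ t) l (𝓝 (g t))) :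
    Tendsto (fun δ => ∫ t in (-h)..0, (Y δ t - g t) ⬝ᵥ A t *ᵥ (Y δ t - g t)) l
      (𝓝 0) := by
  obtain ⟨Cg, hCg⟩ := exists_forall_norm_le hg
  obtain ⟨CA, hCA⟩ := exists_forall_norm_le (v := fun t (p : ι × ι) => A t p.1 p.2)
    fun p => hA p.1 p.2
  have hIoc : Ι (-h) 0 = Ioc (-h) 0 := uIoc_of_le (neg_nonpos.2 hh)
  have hsub : ∀ δ i, PiecewiseCts h fun t => (Y δ t - g t) i := fun δ i => (hY δ i).sub (hg i)
  have key := intervalIntegral.tendsto_integral_filter_of_dominated_convergence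
    (F := fun δ t => (Y δ t - g t) ⬝ᵥ A t *ᵥ (Y δ t - g t)) (f := fun _ => 0)
    (fun _ => Fintype.card ι ^ 2 * ((C + Cg) * CA * (C + Cg)))
    (Eventually.of_forall fun δ => hIoc ▸
      (dotProduct_mulVec (hsub δ) hA (hsub δ)).aestronglyMeasurable.mono_measure
        (Measure.restrict_mono Ioc_subset_Icc_self le_rfl))
    (hYC.mono fun δ hδ => Eventually.of_forall fun t ht => by
      have ht' : t ∈ Icc (-h) 0 := Ioc_subset_Icc_self (hIoc ▸ ht)
      exact Matrix.abs_dotProduct_mulVec_le (A t) ((norm_sub_le _ _).trans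
        (add_le_add (hδ t ht') (hCg t ht'))) fun i j =>
          (norm_le_pi_norm (fun p : ι × ι => A t p.1 p.2) (i, j)).trans (hCA t ht'))
    intervalIntegrable_const
    (by
      filter_upwards [hlim, volume.ae_ne 0] with t hlimt ht0 ht
      rw [hIoc] at ht
      have hq : Continuous fun v => (v - g t) ⬝ᵥ A t *ᵥ (v - g t) := by fun_prop
      simpa [Function.comp_def] using
        (hq.tendsto (g t)).comp (hlimt ⟨ht.1, lt_of_le_of_ne ht.2 ht0⟩))
  simpa only [intervalIntegral.integral_zero] using key

end PiecewiseCts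

section ForwardAverage

variable {E : Type*} [NormedAddCommGroup E] [NormedSpace ℝ E] {G : ℝ → E}

noncomputable def forwardAverage (G : ℝ → E) (δ t : ℝ) : E :=
  δ⁻¹ • ∫ s in t..t + δ, G s

theorem forwardAverage_eq_slope (hG : Integrable G) (δ t : ℝ) :
    forwardAverage G δ t = δ⁻¹ • ((∫ s in 0..t + δ, G s) - ∫ s in 0..t, G s) := by
  rw [forwardAverage, intervalIntegral.integral_interval_sub_left hG.intervalIntegrable
    hG.intervalIntegrable]

theorem continuous_forwardAverage (hG : Integrable G) (δ : ℝ) :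
    Continuous (forwardAverage G δ) := by
  have hF := intervalIntegral.continuous_primitive (fun _ _ => hG.intervalIntegrable) 0
  simp_rw [funext (forwardAverage_eq_slope hG δ)]
  fun_prop

theorem norm_forwardAverage_le {C δ : ℝ} (hGC : ∀ s, ‖G s‖ ≤ C) (hδ : 0 < δ)
    (t : ℝ) : ‖forwardAverage G δ t‖ ≤ C := by
  have hint := intervalIntegral.norm_integral_le_of_norm_le_const (a := t) (b := t + δ)
    fun s _ => hGC s
  rw [add_sub_cancel_left, abs_of_pos hδ] at hint
  rw [forwardAverage, norm_smul, norm_inv, Real.norm_of_nonneg hδ.le]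
  calc δ⁻¹ * ‖∫ s in t..t + δ, G s‖ ≤ δ⁻¹ * (C * δ) := by gcongr
    _ = C := by field_simp

theorem tendsto_forwardAverage [CompleteSpace E] (hG : Integrable G) {t : ℝ}
    (ht : ContinuousAt G t) :
    Tendsto (fun δ => forwardAverage G δ t) (𝓝[>] 0) (𝓝 (G t)) := by
  have hd := intervalIntegral.integral_hasDerivAt_right (a := 0) hG.intervalIntegrable
    hG.aestronglyMeasurable.stronglyMeasurableAtFilter ht
  exact hd.tendsto_slope_zero_right.congr fun δ => (forwardAverage_eq_slope hG δ t).symm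

/-- The approximants are forward moving averages of `G`, corrected by a ramp supported in
`[-δ, 0]` to take the value `x` at `0`. -/
theorem exists_continuous_tendsto_of_integrable [CompleteSpace E] (hG : Integrable G) {C : ℝ}
    (hGC : ∀ s, ‖G s‖ ≤ C) (x : E) :
    ∃ Y : ℝ → ℝ → E, (∀ δ, Continuous (Y δ)) ∧ (∀ δ, Y δ 0 = x) ∧
      (∀ δ > 0, ∀ t ≤ 0, ‖Y δ t‖ ≤ 2 * C + ‖x‖) ∧
      ∀ t < 0, ContinuousAt G t → Tendsto (fun δ => Y δ t) (𝓝[>] 0) (𝓝 (G t)) := by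
  refine ⟨fun δ t => forwardAverage G δ t + max 0 (1 + t / δ) • (x - forwardAverage G δ 0),
    fun δ => ?_, fun δ => by simp, fun δ hδ t ht => ?_, fun t ht hc => ?_⟩
  · have := continuous_forwardAverage hG δ
    fun_prop
  · have hramp : max 0 (1 + t / δ) ≤ 1 :=
      max_le zero_le_one (by linarith [div_nonpos_of_nonpos_of_nonneg ht hδ.le])
    calc _ ≤ ‖forwardAverage G δ t‖ +
          max 0 (1 + t / δ) * ‖x - forwardAverage G δ 0‖ := by
          rw [← Real.norm_of_nonneg (le_max_left 0 (1 + t / δ)), ← norm_smul]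
          exact norm_add_le _ _
      _ ≤ C + 1 * (‖x‖ + C) := by
          gcongr
          · exact norm_forwardAverage_le hGC hδ t
          · exact (norm_sub_le _ _).trans (by gcongr; exact norm_forwardAverage_le hGC hδ 0)
      _ = 2 * C + ‖x‖ := by ring
  · have hramp : ∀ᶠ δ in 𝓝[>] 0, max 0 (1 + t / δ) = 0 := by
      filter_upwards [Ioo_mem_nhdsGT (neg_pos.2 ht)] with δ hδ
      refine max_eq_left ?_
      have : t / δ ≤ -1 := by rw [div_le_iff₀ hδ.1]; linarith [hδ.2]
      linarith
    refine (tendsto_forwardAverage hG hc).congr' (hramp.mono fun δ hδ => ?_)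
    simp [hδ]

end ForwardAverage

section

variable {m n : ℕ} {h ε : ℝ} {M : ℝ → Matrix (Fin (m + n)) (Fin (m + n)) ℝ}

theorem piecewiseCts_schurCompl (hε : 0 < ε) (hMpc : ∀ i j, PiecewiseCts h fun t => M t i j)
    (hM22 : ∀ t ∈ Icc (-h) 0, (blk22 m n (M t) - ε • 1).PosSemidef)
    (i j : Fin m) : PiecewiseCts h fun t => schurCompl (M t) i j :=
  PiecewiseCts.comp_matrix hMpc (isClosed_setOf_blk22_sub_posSemidef ε) hM22
    ((continuous_id.matrix_elem i j).comp_continuousOn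
      (continuousOn_schurCompl.mono (setOf_blk22_sub_posSemidef_subset hε)))

theorem piecewiseCts_minimizer (hε : 0 < ε) (hMpc : ∀ i j, PiecewiseCts h fun t => M t i j)
    (hM22 : ∀ t ∈ Icc (-h) 0, (blk22 m n (M t) - ε • 1).PosSemidef)
    (x : Fin m → ℝ) (i : Fin n) : PiecewiseCts h fun t => minimizer (M t) x i :=
  PiecewiseCts.comp_matrix hMpc (isClosed_setOf_blk22_sub_posSemidef ε) hM22
    ((continuous_apply i).comp_continuousOn
      ((continuousOn_minimizer x).mono (setOf_blk22_sub_posSemidef_subset hε)))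

theorem integral_append_dotProduct_mulVec_append_eq_schurCompl (hh : 0 ≤ h) (hε : 0 < ε)
    (hMsymm : ∀ t ∈ Icc (-h) 0, (M t).IsSymm) (hMpc : ∀ i j, PiecewiseCts h fun t => M t i j)
    (hM22 : ∀ t ∈ Icc (-h) 0, (blk22 m n (M t) - ε • 1).PosSemidef)
    (x : Fin m → ℝ) {y : ℝ → Fin n → ℝ} (hy : ∀ i, PiecewiseCts h fun t => y t i) :
    ∫ t in (-h)..0, Fin.append x (y t) ⬝ᵥ M t *ᵥ Fin.append x (y t) =
      (∫ t in (-h)..0,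
          (y t - minimizer (M t) x) ⬝ᵥ blk22 m n (M t) *ᵥ (y t - minimizer (M t) x)) +
        ∫ t in (-h)..0, x ⬝ᵥ schurCompl (M t) *ᵥ x := by
  have hdiff : ∀ i, PiecewiseCts h fun t => (y t - minimizer (M t) x) i :=
    fun i => (hy i).sub (piecewiseCts_minimizer hε hMpc hM22 x i)
  rw [← intervalIntegral.integral_add ((PiecewiseCts.dotProduct_mulVec
    (A := fun t => blk22 m n (M t)) hdiff (fun i j => hMpc _ _) hdiff).intervalIntegrable hh)
    ((PiecewiseCts.dotProduct_mulVec (fun i => .const (x i))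
      (piecewiseCts_schurCompl hε hMpc hM22) fun i => .const (x i)).intervalIntegrable hh)]
  refine intervalIntegral.integral_congr fun t ht => ?_
  rw [uIcc_of_le (neg_nonpos.2 hh)] at ht
  exact append_dotProduct_mulVec_append_eq_schurCompl (hMsymm t ht)
    (setOf_blk22_sub_posSemidef_subset hε (hM22 t ht)) x (y t)

theorem integral_append_dotProduct_mulVec_append_nonneg (hh : 0 ≤ h)
    (hMpc : ∀ i j, PiecewiseCts h fun t => M t i j) {T : ℝ → Matrix (Fin m) (Fin m) ℝ}
    (hTpc : ∀ i j, PiecewiseCts h fun t => T t i j)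
    (hTpsd : ∀ t ∈ Icc (-h) 0, (M t + embedUL m n (T t)).PosSemidef)
    (hTint : ∀ i j, ∫ t in (-h)..0, T t i j = 0) (x : Fin m → ℝ) {y : ℝ → Fin n → ℝ}
    (hy : ∀ i, PiecewiseCts h fun t => y t i) :
    0 ≤ ∫ t in (-h)..0, Fin.append x (y t) ⬝ᵥ M t *ᵥ Fin.append x (y t) := by
  have hq := (PiecewiseCts.dotProduct_mulVec (PiecewiseCts.append x hy) hMpc
    (PiecewiseCts.append x hy)).intervalIntegrable hh
  have hxTx := (PiecewiseCts.dotProduct_mulVec (fun i => .const (x i)) hTpc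
    fun i => .const (x i)).intervalIntegrable hh
  have hzero : ∫ t in (-h)..0, x ⬝ᵥ T t *ᵥ x = 0 := by
    rw [integral_dotProduct_mulVec_const fun i j => (hTpc i j).intervalIntegrable hh]
    simp [hTint, mulVec, dotProduct]
  calc 0 ≤ ∫ t in (-h)..0,
        Fin.append x (y t) ⬝ᵥ M t *ᵥ Fin.append x (y t) + x ⬝ᵥ T t *ᵥ x :=
        intervalIntegral.integral_nonneg (neg_nonpos.2 hh) fun t ht => by
          simpa [add_mulVec, dotProduct_add, append_dotProduct_embedUL_mulVec_append] using
            (hTpsd t ht).dotProduct_mulVec_nonneg (Fin.append x (y t))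
    _ = _ := by rw [intervalIntegral.integral_add hq hxTx, hzero, add_zero]

end

section

variable {n : ℕ} {h ε : ℝ} {M : ℝ → Matrix (Fin (n + n)) (Fin (n + n)) ℝ}

theorem integral_dotProduct_schurCompl_mulVec_nonneg (hh : 0 < h) (hε : 0 < ε)
    (hMsymm : ∀ t ∈ Icc (-h) 0, (M t).IsSymm) (hMpc : ∀ i j, PiecewiseCts h fun t => M t i j)
    (hM22 : ∀ t ∈ Icc (-h) 0, (blk22 n n (M t) - ε • 1).PosSemidef)
    (hyp : ∀ y : ℝ → Fin n → ℝ, ContinuousOn y (Icc (-h) 0) →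
      0 ≤ ∫ t in (-h)..0, Fin.append (y 0) (y t) ⬝ᵥ (M t).mulVec (Fin.append (y 0) (y t)))
    (x : Fin n → ℝ) :
    0 ≤ ∫ t in (-h)..0, x ⬝ᵥ schurCompl (M t) *ᵥ x := by
  set g : ℝ → Fin n → ℝ := fun t => minimizer (M t) x
  have hg : ∀ i, PiecewiseCts h fun t => g t i := piecewiseCts_minimizer hε hMpc hM22 x
  obtain ⟨C, hC⟩ := PiecewiseCts.exists_forall_norm_le hg
  set G := (Icc (-h) 0).indicator g
  have hGC : ∀ s, ‖G s‖ ≤ C := fun s => by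
    by_cases hs : s ∈ Icc (-h) 0
    · simpa [G, hs] using hC s hs
    · simpa [G, hs] using (norm_nonneg _).trans (hC 0 ⟨by linarith, le_rfl⟩)
  have hGint : Integrable G := (integrable_indicator_iff measurableSet_Icc).2
    (integrable_pi_iff.2 fun i => (hg i).integrableOn)
  obtain ⟨Y, hYc, hY0, hYC, hYlim⟩ := exists_continuous_tendsto_of_integrable hGint hGC x
  have hY : ∀ δ i, PiecewiseCts h fun t => Y δ t i := fun δ i =>
    .of_continuousOn ((continuous_apply i).comp (hYc δ)).continuousOn
  have hlim : ∀ᵐ t, t ∈ Ioo (-h) 0 →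
      Tendsto (fun δ => Y δ t) (𝓝[>] 0) (𝓝 (g t)) := by
    filter_upwards [ae_all_iff.2 fun i => (hg i).ae_continuousAt] with t hgt ht
    have hGg : G =ᶠ[𝓝 t] g := eventually_of_mem (Ioo_mem_nhds ht.1 ht.2) fun s hs =>
      indicator_of_mem (Ioo_subset_Icc_self hs) g
    rw [← hGg.eq_of_nhds]
    exact hYlim t ht.2 ((continuousAt_pi.2 fun i => hgt i ht).congr hGg.symm)
  have hφ := PiecewiseCts.tendsto_integral_dotProduct_mulVec_sub hh.le
    (A := fun t => blk22 n n (M t)) (fun i j => hMpc _ _) hg hY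
    (l := 𝓝[>] 0) (eventually_nhdsWithin_of_forall fun δ hδ t ht => hYC δ hδ t ht.2) hlim
  refine ge_of_tendsto (zero_add (∫ t in (-h)..0, x ⬝ᵥ schurCompl (M t) *ᵥ x) ▸
    hφ.add_const _) (Eventually.of_forall fun δ => ?_)
  rw [← integral_append_dotProduct_mulVec_append_eq_schurCompl hh.le hε hMsymm hMpc hM22 x
    (hY δ), ← hY0 δ]
  exact hyp (Y δ) (hYc δ).continuousOn

theorem posSemidef_integral_schurCompl (hh : 0 < h) (hε : 0 < ε)
    (hMsymm : ∀ t ∈ Icc (-h) 0, (M t).IsSymm) (hMpc : ∀ i j, PiecewiseCts h fun t => M t i j)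
    (hM22 : ∀ t ∈ Icc (-h) 0, (blk22 n n (M t) - ε • 1).PosSemidef)
    (hyp : ∀ y : ℝ → Fin n → ℝ, ContinuousOn y (Icc (-h) 0) →
      0 ≤ ∫ t in (-h)..0, Fin.append (y 0) (y t) ⬝ᵥ (M t).mulVec (Fin.append (y 0) (y t))) :
    (of fun i j => ∫ t in (-h)..0, schurCompl (M t) i j).PosSemidef := by
  have hS := fun i j => (piecewiseCts_schurCompl hε hMpc hM22 i j).intervalIntegrable hh.le
  refine .of_dotProduct_mulVec_nonneg (isHermitian_iff_isSymm.2 <| IsSymm.ext fun i j =>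
    intervalIntegral.integral_congr fun t ht => ?_) fun x => ?_
  · rw [uIcc_of_le (neg_nonpos.2 hh.le)] at ht
    exact (schurCompl_isSymm (hMsymm t ht)).apply i j
  · rw [star_trivial, ← integral_dotProduct_mulVec_const hS]
    exact integral_dotProduct_schurCompl_mulVec_nonneg hh hε hMsymm hMpc hM22 hyp x

end

/-- Let `M : [-h,0] → S^{2n}` be piecewise continuous with
`M₂₂(t) ⪰ ε I` for all `t`.  Then `∫_{-h}^0 [y(0); y(t)]ᵀ M(t) [y(0); y(t)] dt ≥ 0` for
every continuous `y : [-h,0] → ℝⁿ` iff there is a piecewise continuous `T : [-h,0] → Sⁿ`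
with `M(t) + [[T(t),0],[0,0]] ⪰ 0` for all `t ∈ [-h,0]` and `∫_{-h}^0 T(t) dt = 0`. -/
theorem statement4 (n : ℕ) (h ε : ℝ) (hh : 0 < h) (hε : 0 < ε)
    (M : ℝ → Matrix (Fin (n + n)) (Fin (n + n)) ℝ)
    (hMsymm : ∀ t ∈ Set.Icc (-h) 0, (M t).IsSymm)
    (hMpc : ∀ i j, PiecewiseCts h fun t => M t i j)
    (hM22 : ∀ t ∈ Set.Icc (-h) 0,
      (blk22 n n (M t) - ε • (1 : Matrix (Fin n) (Fin n) ℝ)).PosSemidef) :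
    (∀ y : ℝ → Fin n → ℝ, ContinuousOn y (Set.Icc (-h) 0) →
        0 ≤ ∫ t in (-h)..0,
          Fin.append (y 0) (y t) ⬝ᵥ (M t).mulVec (Fin.append (y 0) (y t))) ↔
      ∃ T : ℝ → Matrix (Fin n) (Fin n) ℝ,
        (∀ i j, PiecewiseCts h fun t => T t i j) ∧
        (∀ t ∈ Set.Icc (-h) 0, (T t).IsSymm) ∧
        (∀ t ∈ Set.Icc (-h) 0, (M t + embedUL n n (T t)).PosSemidef) ∧
        (∀ i j, (∫ t in (-h)..0, T t i j) = 0) := by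
  constructor
  · intro hyp
    set Sbar := of fun i j => ∫ t in (-h)..0, schurCompl (M t) i j
    have hSbar : Sbar.PosSemidef := posSemidef_integral_schurCompl hh hε hMsymm hMpc hM22 hyp
    have hS := piecewiseCts_schurCompl hε hMpc hM22
    refine ⟨fun t => h⁻¹ • Sbar - schurCompl (M t),
      fun i j => (PiecewiseCts.const _).sub (hS i j), fun t ht => ?_, fun t ht => ?_,
      fun i j => ?_⟩
    · exact ((isHermitian_iff_isSymm.1 hSbar.isHermitian).smul _).sub
        (schurCompl_isSymm (hMsymm t ht))
    · rw [posSemidef_add_embedUL_iff (hMsymm t ht) ((hM22 t ht).posDef_of_sub_smul_one hε),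
        add_sub_cancel]
      exact hSbar.smul (inv_nonneg.2 hh.le)
    · simp only [Matrix.sub_apply, Matrix.smul_apply, smul_eq_mul]
      rw [intervalIntegral.integral_sub intervalIntegrable_const
        ((hS i j).intervalIntegrable hh.le), intervalIntegral.integral_const]
      simp [Sbar, hh.ne']
  · rintro ⟨T, hTpc, -, hTpsd, hTint⟩ y hy
    exact integral_append_dotProduct_mulVec_append_nonneg hh.le hMpc hTpc hTpsd hTint (y 0)
      fun i => .of_continuousOn ((continuous_apply i).comp_continuousOn hy)
end

section
/- Let N : [−h, 0] × [−h, 0] → S^n be a symmetric binary piecewise polynomial matrix of degree at most d with respect to the partition H₁, …, H_k. Then ∫_{−h}^{0} ∫_{−h}^{0} φ(s)ᵀ N(s, t) φ(t) ds dt ≥ 0 for every continuous function φ : [−h, 0] → ℝⁿ if and only if there exists a positive semidefinite matrix Q ∈ S^{nk(d+1)} such that N(s, t) = Z_{n,d}(s)ᵀ Q Z_{n,d}(t) for all s, t ∈ [−h, 0]. -/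
open Matrix

/-- Given delays `0 = h₀ < h₁ < ⋯ < h_k` (encoded by `hs : Fin (k+1) → ℝ`), the interval
`H₁ = [-h₁, 0]` (for `i = 0`) resp. `H_{i+1} = [-h_{i+1}, -h_i)` (for `i ≥ 1`); these
partition `[-h_k, 0]`. -/
def Hint (k : ℕ) (hs : Fin (k + 1) → ℝ) (i : Fin k) : Set ℝ :=
  if (i : ℕ) = 0 then Set.Icc (-(hs i.succ)) 0
  else Set.Ico (-(hs i.succ)) (-(hs i.castSucc))

/-- `Z_{n,d}(t) = g(t) ⊗ I_n ⊗ z(t)`, where `g` is the vector of indicator functions of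
the intervals `H₁, …, H_k` and `z(t) = (1, t, …, t^d)ᵀ`. -/
noncomputable def Zmat (k d : ℕ) (hs : Fin (k + 1) → ℝ) (ι : Type) [DecidableEq ι]
    (t : ℝ) : Matrix (Fin k × ι × Fin (d + 1)) ι ℝ :=
  Matrix.of fun p b =>
    (Hint k hs p.1).indicator (fun _ => (1 : ℝ)) t *
      (if p.2.1 = b then t ^ (p.2.2 : ℕ) else 0)

/-- `N : [-h,0]² → ℝ^{n×n}` is a binary piecewise polynomial matrix of degree at most `d`
(w.r.t. the partition `H₁, …, H_k`): on each `H_i × H_j` it agrees with a matrix of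
polynomials in `(s,t)` of degree at most `d` in each variable. -/
def IsBinPP (n k d : ℕ) (hs : Fin (k + 1) → ℝ)
    (N : ℝ → ℝ → Matrix (Fin n) (Fin n) ℝ) : Prop :=
  ∀ i j : Fin k, ∃ P : Matrix (Fin n) (Fin n) (MvPolynomial (Fin 2) ℝ),
    (∀ a b, (P a b).degreeOf 0 ≤ d ∧ (P a b).degreeOf 1 ≤ d) ∧
    ∀ s ∈ Hint k hs i, ∀ t ∈ Hint k hs j, ∀ a b,
      N s t a b = MvPolynomial.eval ![s, t] (P a b)

/-!
If `N(s,t) = Z(s)ᵀ Q Z(t)`, the double integral is `vᵀ Q v` with `v = ∫ Z(t) φ(t) dt`, hence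
nonnegative when `Q ⪰ 0`. Conversely, the coefficients of the polynomial pieces of `N` give
`N = Zᵀ M Z`, and the symmetry of `N` lets us replace `M` by `(M + Mᵀ)/2`. Positivity of the
quadratic form of this matrix then follows once every vector is a moment `∫ Z φ` of a continuous
`φ`. Taking `φ = ∑ᵢ τᵢ pᵢ` with tents `τᵢ` supported in `Hᵢ` and polynomials `pᵢ` with coefficient
vector `w`, the moment is `G w` for a Gram matrix `G` with `wᵀ G w = ∑ᵢ ∫ τᵢ |pᵢ|² > 0` for
`w ≠ 0`; so `G` is invertible.
-/

open MeasureTheory Set Polynomial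

noncomputable def tent (a b t : ℝ) : ℝ := max (min (t - a) (b - t)) 0

lemma continuous_tent (a b : ℝ) : Continuous (tent a b) := by
  unfold tent; fun_prop

lemma tent_nonneg (a b t : ℝ) : 0 ≤ tent a b t := le_max_right _ _

lemma tent_pos_iff {a b t : ℝ} : 0 < tent a b t ↔ t ∈ Ioo a b := by
  simp [tent]

lemma tent_eq_zero_of_notMem {a b t : ℝ} (ht : t ∉ Ioo a b) : tent a b t = 0 :=
  (tent_nonneg a b t).antisymm' (not_lt.mp (mt tent_pos_iff.mp ht))

lemma integral_tent_mul_sq_pos {a b c e : ℝ} (hca : c ≤ a) (hab : a < b) (hbe : b ≤ e)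
    {p : ℝ[X]} (hp : p ≠ 0) : 0 < ∫ t in c..e, tent a b t * p.eval t ^ 2 := by
  have hf : Continuous fun t => tent a b t * p.eval t ^ 2 :=
    (continuous_tent a b).mul (p.continuous.pow 2)
  rw [intervalIntegral.integral_pos_iff_support_of_nonneg_ae'
    (ae_of_all _ fun t => mul_nonneg (tent_nonneg a b t) (sq_nonneg _)) (hf.intervalIntegrable _ _)]
  refine ⟨by linarith, ?_⟩
  have hsub : Ioo a b \ {t | p.IsRoot t} ⊆
      Function.support (fun t => tent a b t * p.eval t ^ 2) ∩ Ioc c e := fun t ⟨ht, hroot⟩ =>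
    ⟨mul_ne_zero (tent_pos_iff.mpr ht).ne' (pow_ne_zero 2 hroot),
      hca.trans_lt ht.1, ht.2.le.trans hbe⟩
  calc (0 : ENNReal) < volume (Ioo a b) := by simp [hab]
    _ = volume (Ioo a b \ {t | p.IsRoot t}) :=
      (measure_sdiff_null ((finite_setOfPred_isRoot hp).measure_zero _)).symm
    _ ≤ _ := measure_mono hsub

theorem intervalIntegral.integral_integral_dotProduct_mulVec {ι : Type*} [Fintype ι]
    {a b : ℝ} {y : ℝ → ι → ℝ} (hy : ∀ i, IntervalIntegrable (fun t => y t i) volume a b)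
    (Q : Matrix ι ι ℝ) :
    ∫ s in a..b, ∫ t in a..b, y s ⬝ᵥ Q *ᵥ y t =
      (fun i => ∫ t in a..b, y t i) ⬝ᵥ Q *ᵥ fun i => ∫ t in a..b, y t i := by
  have hinner : ∀ s, ∫ t in a..b, y s ⬝ᵥ Q *ᵥ y t =
      y s ⬝ᵥ Q *ᵥ fun i => ∫ t in a..b, y t i := fun s => by
    simp only [dotProduct_mulVec (y s) Q]
    simp only [dotProduct, ← intervalIntegral.integral_const_mul]
    exact intervalIntegral.integral_finsetSum fun i _ => (hy i).const_mul _
  rw [intervalIntegral.integral_congr fun s _ => hinner s]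
  simp only [dotProduct]
  rw [intervalIntegral.integral_finsetSum fun i _ => (hy i).mul_const _]
  simp only [intervalIntegral.integral_mul_const]

theorem eq_transpose_mul_half_add_transpose_mul {ι κ : Type*} [Fintype ι] {S : Set ℝ}
    {A : ℝ → Matrix ι κ ℝ} {N : ℝ → ℝ → Matrix κ κ ℝ} (hN : ∀ s t, N s t = (N t s)ᵀ)
    {M : Matrix ι ι ℝ} (hM : ∀ s ∈ S, ∀ t ∈ S, N s t = (A s)ᵀ * M * A t) :
    ∀ s ∈ S, ∀ t ∈ S, N s t = (A s)ᵀ * ((2⁻¹ : ℝ) • (M + Mᵀ)) * A t := by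
  intro s hs t ht
  have hMt : (A s)ᵀ * Mᵀ * A t = N s t := by
    rw [hN, hM t ht s hs, transpose_mul, transpose_mul, transpose_transpose, Matrix.mul_assoc]
  rw [Matrix.mul_smul, Matrix.smul_mul, Matrix.mul_add, Matrix.add_mul, hMt, ← hM s hs t ht,
    ← two_smul ℝ (N s t), smul_smul]
  norm_num

theorem isHermitian_half_smul_add_transpose {ι : Type*} (M : Matrix ι ι ℝ) :
    ((2⁻¹ : ℝ) • (M + Mᵀ)).IsHermitian := by
  ext i j
  simp [add_comm, mul_add]

open Finsupp in
theorem MvPolynomial.eval_fin_two_eq_sum {R : Type*} [CommSemiring R] {d : ℕ}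
    {P : MvPolynomial (Fin 2) R} (h0 : P.degreeOf 0 ≤ d) (h1 : P.degreeOf 1 ≤ d) (x y : R) :
    eval ![x, y] P = ∑ p : Fin (d + 1), ∑ q : Fin (d + 1),
      coeff (single 0 (p : ℕ) + single 1 (q : ℕ)) P * x ^ (p : ℕ) * y ^ (q : ℕ) := by
  set e : Fin (d + 1) × Fin (d + 1) → Fin 2 →₀ ℕ :=
    fun pq => single 0 (pq.1 : ℕ) + single 1 (pq.2 : ℕ)
  have he : e.Injective := fun pq pq' h => Prod.ext
    (Fin.ext (by simpa [e] using DFunLike.congr_fun h 0))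
    (Fin.ext (by simpa [e] using DFunLike.congr_fun h 1))
  have hsupp : P.support ⊆ Finset.univ.image e := fun m hm => by
    have hm0 := (degreeOf_le_iff.mp le_rfl m hm).trans h0
    have hm1 := (degreeOf_le_iff.mp le_rfl m hm).trans h1
    refine Finset.mem_image.mpr ⟨(⟨m 0, by omega⟩, ⟨m 1, by omega⟩), Finset.mem_univ _, ?_⟩
    ext i; fin_cases i <;> simp [e]
  rw [eval_eq', Finset.sum_subset hsupp fun m _ hm => by rw [notMem_support_iff.mp hm, zero_mul],
    Finset.sum_image fun _ _ _ _ h => he h, ← Finset.univ_product_univ, Finset.sum_product]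
  simp [e, Fin.prod_univ_two, mul_assoc]

section Delays

variable {k : ℕ} {hs : Fin (k + 1) → ℝ}

lemma neg_delay_nonpos (hs0 : hs 0 = 0) (hmono : StrictMono hs) (i : Fin (k + 1)) :
    -hs i ≤ 0 :=
  neg_nonpos.mpr (hs0 ▸ hmono.monotone (Fin.zero_le i))

namespace Hint

lemma Ioo_subset (hs0 : hs 0 = 0) (i : Fin k) :
    Ioo (-hs i.succ) (-hs i.castSucc) ⊆ Hint k hs i := by
  intro t ht
  unfold Hint
  split_ifs with h0
  · have : i.castSucc = 0 := Fin.ext h0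
    rw [this, hs0, neg_zero] at ht
    exact ⟨ht.1.le, ht.2.le⟩
  · exact ⟨ht.1.le, ht.2⟩

lemma neg_succ_le (i : Fin k) {t : ℝ} (ht : t ∈ Hint k hs i) : -hs i.succ ≤ t := by
  unfold Hint at ht
  split_ifs at ht
  exacts [ht.1, ht.1]

lemma disjoint (hmono : StrictMono hs) {i j : Fin k} (hij : i ≠ j) :
    Disjoint (Hint k hs i) (Hint k hs j) := by
  wlog hlt : i < j generalizing i j
  · exact (this hij.symm (hij.lt_or_gt.resolve_left hlt)).symm
  refine Set.disjoint_left.mpr fun t hti htj => ?_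
  have hj0 : (j : ℕ) ≠ 0 := by have : (i : ℕ) < j := hlt; omega
  unfold Hint at htj
  rw [if_neg hj0] at htj
  have : hs i.succ ≤ hs j.castSucc := hmono.monotone (Fin.succ_le_castSucc_iff.mpr hlt)
  linarith [neg_succ_le i hti, htj.2]

lemma exists_mem (hk : 0 < k) {t : ℝ} (ht : t ∈ Icc (-hs (Fin.last k)) 0) :
    ∃ i, t ∈ Hint k hs i := by
  have hlast : (⟨k - 1, by omega⟩ : Fin k).succ = Fin.last k := Fin.ext (by simp only [Fin.succ_mk, Fin.val_last]; omega)
  obtain ⟨i, hi, hmin⟩ := (Finset.univ.filter fun i : Fin k => -hs i.succ ≤ t).exists_min_image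
    id ⟨⟨k - 1, by omega⟩, by simpa [hlast] using ht.1⟩
  simp only [Finset.mem_filter, Finset.mem_univ, true_and, id] at hi hmin
  refine ⟨i, ?_⟩
  unfold Hint
  split_ifs with h0
  · exact ⟨hi, ht.2⟩
  · refine ⟨hi, lt_of_not_ge fun hle => ?_⟩
    have hne : i.castSucc ≠ 0 := fun h => h0 (congrArg Fin.val h)
    have := hmin (i.castSucc.pred hne) (by rwa [Fin.succ_pred])
    rw [Fin.le_def, Fin.val_pred, Fin.val_castSucc] at this
    omega

lemma measurableSet (i : Fin k) : MeasurableSet (Hint k hs i) := by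
  unfold Hint
  split_ifs
  exacts [measurableSet_Icc, measurableSet_Ico]

end Hint

section Zmat

variable {d : ℕ} {ι : Type} [DecidableEq ι]

lemma Zmat_apply_of_mem (hmono : StrictMono hs) {i : Fin k} {t : ℝ} (ht : t ∈ Hint k hs i)
    (p : Fin k × ι × Fin (d + 1)) (b : ι) :
    Zmat k d hs ι t p b = if p.1 = i ∧ p.2.1 = b then t ^ (p.2.2 : ℕ) else 0 := by
  by_cases hp : p.1 = i
  · simp [Zmat, hp, ht]
  · have : t ∉ Hint k hs p.1 := Set.disjoint_right.mp (Hint.disjoint hmono hp) ht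
    simp [Zmat, hp, this]

variable [Fintype ι]

lemma Zmat_mulVec_apply (t : ℝ) (x : ι → ℝ) (p : Fin k × ι × Fin (d + 1)) :
    (Zmat k d hs ι t *ᵥ x) p =
      (Hint k hs p.1).indicator (fun _ => (1 : ℝ)) t * (t ^ (p.2.2 : ℕ) * x p.2.1) := by
  simp [Zmat, Matrix.mulVec, dotProduct, mul_assoc]

lemma transpose_Zmat_mul_mul_Zmat_apply (hmono : StrictMono hs)
    (Q : Matrix (Fin k × ι × Fin (d + 1)) (Fin k × ι × Fin (d + 1)) ℝ)
    {i j : Fin k} {s t : ℝ} (hsi : s ∈ Hint k hs i) (htj : t ∈ Hint k hs j) (a b : ι) :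
    ((Zmat k d hs ι s)ᵀ * Q * Zmat k d hs ι t) a b =
      ∑ p : Fin (d + 1), ∑ q : Fin (d + 1), Q (i, a, p) (j, b, q) * s ^ (p : ℕ) * t ^ (q : ℕ) := by
  simp only [Matrix.mul_apply, transpose_apply, Zmat_apply_of_mem hmono hsi,
    Zmat_apply_of_mem hmono htj, ite_and, ite_mul, mul_ite, zero_mul, mul_zero,
    Fintype.sum_prod_type, Finset.sum_ite_irrel, Finset.sum_const_zero, Finset.sum_ite_eq',
    Finset.mem_univ, ↓reduceIte, Finset.sum_mul]
  rw [Finset.sum_comm]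
  exact Finset.sum_congr rfl fun p _ => Finset.sum_congr rfl fun q _ => by ring

end Zmat

open Finsupp in
lemma IsBinPP.exists_eq_transpose_Zmat_mul_mul_Zmat {n d : ℕ} (hk : 0 < k) (hmono : StrictMono hs)
    {N : ℝ → ℝ → Matrix (Fin n) (Fin n) ℝ} (hN : IsBinPP n k d hs N) :
    ∃ M : Matrix (Fin k × Fin n × Fin (d + 1)) (Fin k × Fin n × Fin (d + 1)) ℝ,
      ∀ s ∈ Icc (-hs (Fin.last k)) 0, ∀ t ∈ Icc (-hs (Fin.last k)) 0,
        N s t = (Zmat k d hs (Fin n) s)ᵀ * M * Zmat k d hs (Fin n) t := by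
  choose P hPdeg hPeq using hN
  refine ⟨Matrix.of fun r c =>
    MvPolynomial.coeff (single 0 (r.2.2 : ℕ) + single 1 (c.2.2 : ℕ)) (P r.1 c.1 r.2.1 c.2.1),
    fun s hs' t ht => ?_⟩
  obtain ⟨i, hi⟩ := Hint.exists_mem hk hs'
  obtain ⟨j, hj⟩ := Hint.exists_mem hk ht
  ext a b
  rw [transpose_Zmat_mul_mul_Zmat_apply hmono _ hi hj, hPeq i j s hi t hj,
    MvPolynomial.eval_fin_two_eq_sum (hPdeg i j a b).1 (hPdeg i j a b).2]
  rfl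

noncomputable section TestFunctions

variable {d : ℕ} {ι : Type}

def hintTent (hs : Fin (k + 1) → ℝ) (i : Fin k) : ℝ → ℝ := tent (-hs i.succ) (-hs i.castSucc)

lemma hintTent_eq_zero_of_mem (hs0 : hs 0 = 0) (hmono : StrictMono hs) {i j : Fin k}
    (hij : i ≠ j) {t : ℝ} (ht : t ∈ Hint k hs j) : hintTent hs i t = 0 :=
  tent_eq_zero_of_notMem fun hIoo =>
    Set.disjoint_left.mp (Hint.disjoint hmono hij) (Hint.Ioo_subset hs0 i hIoo) ht

lemma hintTent_eq_zero_of_notMem (hs0 : hs 0 = 0) {i : Fin k} {t : ℝ} (ht : t ∉ Hint k hs i) :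
    hintTent hs i t = 0 :=
  tent_eq_zero_of_notMem fun hIoo => ht (Hint.Ioo_subset hs0 i hIoo)

def blockPoly (w : Fin k × ι × Fin (d + 1) → ℝ) (j : Fin k) (b : ι) : ℝ[X] :=
  ∑ m : Fin (d + 1), C (w (j, b, m)) * X ^ (m : ℕ)

lemma eval_blockPoly (w : Fin k × ι × Fin (d + 1) → ℝ) (j : Fin k) (b : ι) (t : ℝ) :
    (blockPoly w j b).eval t = ∑ m : Fin (d + 1), w (j, b, m) * t ^ (m : ℕ) := by
  simp [blockPoly, eval_finsetSum]

lemma coeff_blockPoly (w : Fin k × ι × Fin (d + 1) → ℝ) (j : Fin k) (b : ι) (m : Fin (d + 1)) :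
    (blockPoly w j b).coeff m = w (j, b, m) := by
  simp [blockPoly, finsetSum_coeff, Fin.val_inj]

-- The tents vanish at the breakpoints, where `Zmat` jumps, so this is continuous.
def testFun (hs : Fin (k + 1) → ℝ) (w : Fin k × ι × Fin (d + 1) → ℝ) (t : ℝ) : ι → ℝ :=
  fun b => ∑ i, hintTent hs i t * (blockPoly w i b).eval t

lemma continuous_testFun (w : Fin k × ι × Fin (d + 1) → ℝ) : Continuous (testFun hs w) :=
  continuous_pi fun b => continuous_finsetSum _ fun i _ =>
    (continuous_tent _ _).mul (blockPoly w i b).continuous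

lemma Zmat_mulVec_testFun_apply [DecidableEq ι] [Fintype ι] (hs0 : hs 0 = 0) (hmono : StrictMono hs)
    (w : Fin k × ι × Fin (d + 1) → ℝ) (t : ℝ) (j : Fin k) (b : ι) (q : Fin (d + 1)) :
    (Zmat k d hs ι t *ᵥ testFun hs w t) (j, b, q) =
      hintTent hs j t * t ^ (q : ℕ) * (blockPoly w j b).eval t := by
  rw [Zmat_mulVec_apply]
  by_cases ht : t ∈ Hint k hs j
  · rw [testFun, Finset.sum_eq_single j (fun i _ hij => by
      rw [hintTent_eq_zero_of_mem hs0 hmono hij ht, zero_mul]) (by simp),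
      indicator_of_mem ht]
    ring
  · rw [indicator_of_notMem ht, hintTent_eq_zero_of_notMem hs0 ht]
    ring

end TestFunctions

noncomputable section Gram

variable {d : ℕ} {ι : Type} [DecidableEq ι] [Fintype ι]

def tentGram (hs : Fin (k + 1) → ℝ) (ι : Type) [DecidableEq ι] (d : ℕ) :
    Matrix (Fin k × ι × Fin (d + 1)) (Fin k × ι × Fin (d + 1)) ℝ :=
  Matrix.of fun r c => if r.1 = c.1 ∧ r.2.1 = c.2.1 then
    ∫ t in (-hs (Fin.last k))..0, hintTent hs r.1 t * t ^ ((r.2.2 : ℕ) + c.2.2) else 0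

lemma tentGram_mulVec_apply (w : Fin k × ι × Fin (d + 1) → ℝ) (j : Fin k) (b : ι)
    (q : Fin (d + 1)) :
    (tentGram hs ι d *ᵥ w) (j, b, q) = ∫ t in (-hs (Fin.last k))..0,
      hintTent hs j t * t ^ (q : ℕ) * (blockPoly w j b).eval t := by
  simp only [eval_blockPoly, Finset.mul_sum]
  rw [intervalIntegral.integral_finsetSum fun m _ => by
    exact (((continuous_tent _ _).mul (continuous_pow _)).mul
      (continuous_const.mul (continuous_pow _))).intervalIntegrable _ _]
  simp only [mulVec, dotProduct, tentGram, of_apply, ite_and, ite_mul, zero_mul,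
    ← intervalIntegral.integral_mul_const, Fintype.sum_prod_type, Finset.sum_ite_irrel,
    Finset.sum_const_zero, Finset.sum_ite_eq, Finset.mem_univ, ↓reduceIte]
  exact Finset.sum_congr rfl fun m _ => intervalIntegral.integral_congr fun t _ => by ring

lemma dotProduct_tentGram_mulVec (w : Fin k × ι × Fin (d + 1) → ℝ) :
    w ⬝ᵥ tentGram hs ι d *ᵥ w = ∑ jb : Fin k × ι, ∫ t in (-hs (Fin.last k))..0,
      hintTent hs jb.1 t * (blockPoly w jb.1 jb.2).eval t ^ 2 := by
  simp only [dotProduct, Fintype.sum_prod_type, tentGram_mulVec_apply,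
    ← intervalIntegral.integral_const_mul]
  refine Finset.sum_congr rfl fun j _ => Finset.sum_congr rfl fun b _ => ?_
  rw [← intervalIntegral.integral_finsetSum fun q _ => by
    exact (continuous_const.mul (((continuous_tent _ _).mul (continuous_pow _)).mul
      (blockPoly w j b).continuous)).intervalIntegrable _ _]
  refine intervalIntegral.integral_congr fun t _ => ?_
  rw [sq]
  nth_rewrite 2 [eval_blockPoly]
  rw [Finset.sum_mul, Finset.mul_sum]
  exact Finset.sum_congr rfl fun q _ => by ring

lemma dotProduct_tentGram_mulVec_pos (hs0 : hs 0 = 0) (hmono : StrictMono hs)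
    {w : Fin k × ι × Fin (d + 1) → ℝ} (hw : w ≠ 0) : 0 < w ⬝ᵥ tentGram hs ι d *ᵥ w := by
  obtain ⟨⟨j, b, m⟩, hjbm⟩ := Function.ne_iff.mp hw
  rw [dotProduct_tentGram_mulVec]
  refine Finset.sum_pos' (fun jb _ => intervalIntegral.integral_nonneg
    (neg_delay_nonpos hs0 hmono _) fun t _ => mul_nonneg (tent_nonneg _ _ _) (sq_nonneg _))
    ⟨(j, b), Finset.mem_univ _, ?_⟩
  refine integral_tent_mul_sq_pos (neg_le_neg (hmono.monotone (Fin.le_last _)))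
    (neg_lt_neg (hmono Fin.castSucc_lt_succ)) (neg_delay_nonpos hs0 hmono _) fun h => hjbm ?_
  rw [← coeff_blockPoly w, h, coeff_zero, Pi.zero_apply]

lemma tentGram_mulVec_surjective (hs0 : hs 0 = 0) (hmono : StrictMono hs) :
    Function.Surjective (tentGram hs ι d *ᵥ ·) := by
  rw [Matrix.mulVec_surjective_iff_isUnit, ← Matrix.mulVec_injective_iff_isUnit]
  intro w w' h
  by_contra hne
  have := dotProduct_tentGram_mulVec_pos (d := d) hs0 hmono (sub_ne_zero.mpr hne)
  rw [mulVec_sub, h, sub_self, dotProduct_zero] at this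
  exact lt_irrefl 0 this

end Gram

noncomputable section Moments

variable {d : ℕ} {ι : Type} [DecidableEq ι] [Fintype ι]

def zMoment (k d : ℕ) (hs : Fin (k + 1) → ℝ) (ι : Type) [DecidableEq ι] [Fintype ι]
    (φ : ℝ → ι → ℝ) : Fin k × ι × Fin (d + 1) → ℝ :=
  fun q => ∫ t in (-hs (Fin.last k))..0, (Zmat k d hs ι t *ᵥ φ t) q

lemma zMoment_testFun (hs0 : hs 0 = 0) (hmono : StrictMono hs)
    (w : Fin k × ι × Fin (d + 1) → ℝ) : zMoment k d hs ι (testFun hs w) = tentGram hs ι d *ᵥ w := by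
  ext ⟨j, b, q⟩
  simp only [zMoment, Zmat_mulVec_testFun_apply hs0 hmono, tentGram_mulVec_apply]

lemma exists_continuous_zMoment_eq (hs0 : hs 0 = 0) (hmono : StrictMono hs)
    (x : Fin k × ι × Fin (d + 1) → ℝ) : ∃ φ, Continuous φ ∧ zMoment k d hs ι φ = x := by
  obtain ⟨w, rfl⟩ := tentGram_mulVec_surjective (d := d) hs0 hmono x
  exact ⟨testFun hs w, continuous_testFun w, zMoment_testFun hs0 hmono w⟩

lemma intervalIntegrable_Zmat_mulVec_apply (hs0 : hs 0 = 0) (hmono : StrictMono hs)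
    {φ : ℝ → ι → ℝ} (hφ : ContinuousOn φ (Icc (-hs (Fin.last k)) 0))
    (q : Fin k × ι × Fin (d + 1)) :
    IntervalIntegrable (fun t => (Zmat k d hs ι t *ᵥ φ t) q) volume (-hs (Fin.last k)) 0 := by
  have hind : (fun t => (Zmat k d hs ι t *ᵥ φ t) q) =
      (Hint k hs q.1).indicator fun t => t ^ (q.2.2 : ℕ) * φ t q.2.1 := by
    ext t
    by_cases ht : t ∈ Hint k hs q.1 <;> simp [Zmat_mulVec_apply, ht]
  rw [hind, intervalIntegrable_iff_integrableOn_Icc_of_le (neg_delay_nonpos hs0 hmono _)]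
  exact ((continuous_pow _).continuousOn.mul (continuousOn_pi.mp hφ q.2.1)).integrableOn_Icc
    |>.indicator (Hint.measurableSet q.1)

lemma integral_integral_eq_zMoment (hs0 : hs 0 = 0) (hmono : StrictMono hs)
    {N : ℝ → ℝ → Matrix ι ι ℝ} {Q : Matrix (Fin k × ι × Fin (d + 1)) (Fin k × ι × Fin (d + 1)) ℝ}
    (hNQ : ∀ s ∈ Icc (-hs (Fin.last k)) 0, ∀ t ∈ Icc (-hs (Fin.last k)) 0,
      N s t = (Zmat k d hs ι s)ᵀ * Q * Zmat k d hs ι t)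
    {φ : ℝ → ι → ℝ} (hφ : ContinuousOn φ (Icc (-hs (Fin.last k)) 0)) :
    ∫ s in (-hs (Fin.last k))..0, ∫ t in (-hs (Fin.last k))..0, φ s ⬝ᵥ N s t *ᵥ φ t =
      zMoment k d hs ι φ ⬝ᵥ Q *ᵥ zMoment k d hs ι φ := by
  unfold zMoment
  rw [← intervalIntegral.integral_integral_dotProduct_mulVec
    (intervalIntegrable_Zmat_mulVec_apply hs0 hmono hφ)]
  have hIcc := uIcc_of_le (neg_delay_nonpos hs0 hmono (Fin.last k))
  refine intervalIntegral.integral_congr fun s hs' => intervalIntegral.integral_congr fun t ht => ?_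
  rw [hIcc] at hs' ht
  simp only [hNQ s hs' t ht, Matrix.mul_assoc, ← mulVec_mulVec, dotProduct_mulVec (φ s),
    vecMul_transpose]

end Moments

end Delays

/-- Let `N` be a symmetric binary piecewise polynomial matrix of degree
at most `d`.  Then `∫∫ φ(s)ᵀ N(s,t) φ(t) ds dt ≥ 0` for every continuous
`φ : [-h,0] → ℝⁿ` iff there is a positive semidefinite `Q ∈ S^{nk(d+1)}` with
`N(s,t) = Z_{n,d}(s)ᵀ Q Z_{n,d}(t)` for all `s, t ∈ [-h,0]`. -/
theorem statement8 (n k d : ℕ) (hk : 0 < k) (hs : Fin (k + 1) → ℝ)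
    (hs0 : hs 0 = 0) (hmono : StrictMono hs)
    (N : ℝ → ℝ → Matrix (Fin n) (Fin n) ℝ)
    (hNsym : ∀ s t, N s t = (N t s)ᵀ)
    (hN : IsBinPP n k d hs N) :
    (∀ φ : ℝ → Fin n → ℝ, ContinuousOn φ (Set.Icc (-(hs (Fin.last k))) 0) →
        0 ≤ ∫ s in (-(hs (Fin.last k)))..0, ∫ t in (-(hs (Fin.last k)))..0,
          φ s ⬝ᵥ (N s t).mulVec (φ t)) ↔
      ∃ Q : Matrix (Fin k × Fin n × Fin (d + 1)) (Fin k × Fin n × Fin (d + 1)) ℝ,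
        Q.PosSemidef ∧
        ∀ s ∈ Set.Icc (-(hs (Fin.last k))) 0, ∀ t ∈ Set.Icc (-(hs (Fin.last k))) 0,
          N s t = (Zmat k d hs (Fin n) s)ᵀ * Q * Zmat k d hs (Fin n) t := by
  constructor
  · intro hpos
    obtain ⟨M, hM⟩ := hN.exists_eq_transpose_Zmat_mul_mul_Zmat hk hmono
    have hQ := eq_transpose_mul_half_add_transpose_mul hNsym hM
    refine ⟨_, .of_dotProduct_mulVec_nonneg (isHermitian_half_smul_add_transpose M) fun x => ?_, hQ⟩
    obtain ⟨φ, hφ, rfl⟩ := exists_continuous_zMoment_eq (d := d) (ι := Fin n) hs0 hmono x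
    rw [star_trivial, ← integral_integral_eq_zMoment hs0 hmono hQ hφ.continuousOn]
    exact hpos φ hφ.continuousOn
  · rintro ⟨Q, hQ, hNQ⟩ φ hφ
    rw [integral_integral_eq_zMoment hs0 hmono hNQ hφ]
    exact hQ.dotProduct_mulVec_nonneg _
end
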